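/- Let n ≥ 2, B the open unit ball of ℝⁿ, and 0 < δ < 1. There exist a sequence of points {a_k} in B and a positive integer N such that: (i) ρ(a_j, a_k) ≥ δ for all j ≠ k; (ii) the union of the pseudohyperbolic balls E_δ(a_k) over all k equals B; (iii) every x ∈ B belongs to at most N of the balls E_δ(a_k). -/

import Mathlib

open MeasureTheory Filter Set
open scoped ENNReal NNReal Topology

noncomputable section

/-- Euclidean space ℝⁿ. -/
abbrev E (n : ℕ) := EuclideanSpace ℝ (Fin n)

/-- The open unit ball of ℝⁿ. -/
def Bset (n : ℕ) : Set (E n) := Metric.ball 0 1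

/-- The bracket `[x,y] = √(1 − 2 x·y + |x|²|y|²)`. -/
def br {n : ℕ} (x y : E n) : ℝ := Real.sqrt (1 - 2 * (inner ℝ x y : ℝ) + ‖x‖ ^ 2 * ‖y‖ ^ 2)

/-- The pseudohyperbolic distance `ρ(x,y) = |x − y|/[x,y]`. -/
def pd {n : ℕ} (x y : E n) : ℝ := ‖x - y‖ / br x y

/-- The pseudohyperbolic ball `E_δ(x) = {y ∈ B : ρ(x,y) < δ}`. -/
def Eball {n : ℕ} (δ : ℝ) (x : E n) : Set (E n) := {y | y ∈ Bset n ∧ pd x y < δ}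

/-- Lebesgue volume measure on ℝⁿ normalized so that `ν(B) = 1`. -/
def nu (n : ℕ) : Measure (E n) := (volume (Bset n))⁻¹ • volume

/-!
Take a maximal `δ`-separated subset `S` of `B` (Zorn); by maximality the balls `E_δ(a)`, `a ∈ S`,
cover `B`. Everything else comes from `[x,y]² = (1 - |x|²)(1 - |y|²) + |x - y|²` and
`[x,y] ≥ (1 - |x|²)/2`: if `ρ(x,y) < δ` then `1 - |x|²` and `1 - |y|²` agree up to the factor
`4/(1 - δ²)` and `|x - y| ≲ δ(1 - |x|²)`, while if `ρ(x,y) ≥ δ` then `|x - y| ≥ δ(1 - |x|²)/2`.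
So points of `S` carry pairwise disjoint Euclidean balls of radius `≍ δ(1 - |a|²)`, which makes `S`
countable and, by comparing volumes, bounds the number of `a ∈ S` with `x ∈ E_δ(a)` by
`(48/(1 - δ²)²)ⁿ`. Finally `S` is infinite, since finitely many balls `E_δ(a)` stay away from the
unit sphere; enumerating `S` gives the sequence.
-/

open Metric

theorem Set.finite_and_ncard_le_of_forall_finset_card_le {α : Type*} {s : Set α} {N : ℕ}
    (h : ∀ t : Finset α, ↑t ⊆ s → t.card ≤ N) : s.Finite ∧ s.ncard ≤ N := by
  rw [← Set.encard_le_coe_iff_finite_ncard_le]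
  by_contra! hlt
  obtain ⟨t, hts, ht⟩ := Set.exists_subset_encard_eq (Order.add_one_le_of_lt hlt)
  have htfin : t.Finite := Set.finite_of_encard_eq_coe ht
  have := h htfin.toFinset (by simpa using hts)
  rw [htfin.encard_eq_coe_toFinset_card] at ht
  norm_cast at ht
  omega

theorem card_mul_pow_finrank_le_of_pairwiseDisjoint_ball {V ι : Type*} [NormedAddCommGroup V]
    [NormedSpace ℝ V] [FiniteDimensional ℝ V] [MeasurableSpace V] [BorelSpace V]
    (μ : Measure V) [μ.IsAddHaarMeasure] {F : Finset ι} {c : ι → V} {x : V} {r R : ℝ}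
    (hr : 0 < r) (hR : 0 < R) (hsub : ∀ k ∈ F, ball (c k) r ⊆ ball x R)
    (hdisj : (F : Set ι).PairwiseDisjoint fun k => ball (c k) r) :
    F.card * r ^ Module.finrank ℝ V ≤ R ^ Module.finrank ℝ V := by
  set d := Module.finrank ℝ V
  set V₁ := μ (ball (0 : V) 1)
  have hV₁ : V₁ ≠ 0 := (measure_ball_pos μ 0 one_pos).ne'
  have hV₁' : V₁ ≠ ⊤ := measure_ball_lt_top.ne
  have hvol : (F.card : ℝ≥0∞) * ENNReal.ofReal (r ^ d) * V₁ ≤ ENNReal.ofReal (R ^ d) * V₁ :=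
    calc (F.card : ℝ≥0∞) * ENNReal.ofReal (r ^ d) * V₁
        = ∑ k ∈ F, μ (ball (c k) r) := by
          simp only [μ.addHaar_ball_of_pos _ hr, Finset.sum_const, nsmul_eq_mul, mul_assoc, d, V₁]
      _ = μ (⋃ k ∈ F, ball (c k) r) :=
          (measure_biUnion_finset hdisj fun _ _ => isOpen_ball.measurableSet).symm
      _ ≤ μ (ball x R) := measure_mono (Set.iUnion₂_subset hsub)
      _ = ENNReal.ofReal (R ^ d) * V₁ := μ.addHaar_ball_of_pos _ hR
  rw [ENNReal.mul_le_mul_iff_left hV₁ hV₁', ← ENNReal.ofReal_natCast,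
    ← ENNReal.ofReal_mul (by positivity)] at hvol
  exact (ENNReal.ofReal_le_ofReal_iff (by positivity)).1 hvol

section Pseudohyperbolic

variable {n : ℕ}

theorem mem_Bset_iff {x : E n} : x ∈ Bset n ↔ ‖x‖ < 1 := mem_ball_zero_iff

theorem one_sub_two_inner_add_eq (x y : E n) :
    1 - 2 * inner ℝ x y + ‖x‖ ^ 2 * ‖y‖ ^ 2 = (1 - ‖x‖ ^ 2) * (1 - ‖y‖ ^ 2) + ‖x - y‖ ^ 2 := by
  rw [norm_sub_sq_real]
  ring

theorem sq_one_sub_norm_mul_norm_le (x y : E n) :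
    (1 - ‖x‖ * ‖y‖) ^ 2 ≤ 1 - 2 * inner ℝ x y + ‖x‖ ^ 2 * ‖y‖ ^ 2 := by
  nlinarith [real_inner_le_norm x y]

theorem br_sq (x y : E n) : br x y ^ 2 = (1 - ‖x‖ ^ 2) * (1 - ‖y‖ ^ 2) + ‖x - y‖ ^ 2 := by
  rw [br, Real.sq_sqrt ((sq_nonneg _).trans (sq_one_sub_norm_mul_norm_le x y)),
    one_sub_two_inner_add_eq]

theorem one_sub_norm_mul_norm_le_br (x y : E n) : 1 - ‖x‖ * ‖y‖ ≤ br x y :=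
  (le_abs_self _).trans (Real.abs_le_sqrt (sq_one_sub_norm_mul_norm_le x y))

theorem one_sub_norm_sq_div_two_le_br {x y : E n} (hx : ‖x‖ ≤ 1) (hy : ‖y‖ ≤ 1) :
    (1 - ‖x‖ ^ 2) / 2 ≤ br x y := by
  nlinarith [one_sub_norm_mul_norm_le_br x y, norm_nonneg x, norm_nonneg y]

theorem br_pos {x y : E n} (hx : ‖x‖ < 1) (hy : ‖y‖ ≤ 1) : 0 < br x y :=
  lt_of_lt_of_le (by nlinarith [norm_nonneg x]) (one_sub_norm_sq_div_two_le_br hx.le hy)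

theorem br_comm (x y : E n) : br x y = br y x := by
  rw [br, br, real_inner_comm, mul_comm (‖x‖ ^ 2)]

theorem pd_comm (x y : E n) : pd x y = pd y x := by
  rw [pd, pd, norm_sub_rev, br_comm]

theorem pd_self (x : E n) : pd x x = 0 := by simp [pd]

theorem pd_nonneg (x y : E n) : 0 ≤ pd x y := div_nonneg (norm_nonneg _) (Real.sqrt_nonneg _)

variable {δ : ℝ} {x y : E n}

theorem one_sub_sq_mul_br_sq_lt (hx : ‖x‖ < 1) (hy : ‖y‖ ≤ 1) (h : pd x y < δ) :
    (1 - δ ^ 2) * br x y ^ 2 < (1 - ‖x‖ ^ 2) * (1 - ‖y‖ ^ 2) := by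
  have hb := br_pos hx hy
  have hd : ‖x - y‖ < δ * br x y := (div_lt_iff₀ hb).1 h
  nlinarith [br_sq x y, norm_nonneg (x - y)]

theorem lt_one_sub_norm_sq_of_pd_lt (hδ : δ < 1) (hx : ‖x‖ < 1) (hy : ‖y‖ ≤ 1)
    (h : pd x y < δ) : (1 - δ ^ 2) * (1 - ‖x‖ ^ 2) / 4 < 1 - ‖y‖ ^ 2 := by
  have ht : 0 < 1 - ‖x‖ ^ 2 := by nlinarith [norm_nonneg x]
  have hδ0 : 0 ≤ δ := (pd_nonneg x y).trans h.le
  have hb : ((1 - ‖x‖ ^ 2) / 2) ^ 2 ≤ br x y ^ 2 :=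
    pow_le_pow_left₀ (by positivity) (one_sub_norm_sq_div_two_le_br hx.le hy) 2
  have key := one_sub_sq_mul_br_sq_lt hx hy h
  have : (1 - δ ^ 2) * (1 - ‖x‖ ^ 2) / 4 * (1 - ‖x‖ ^ 2) < (1 - ‖y‖ ^ 2) * (1 - ‖x‖ ^ 2) := by
    nlinarith [mul_le_mul_of_nonneg_left hb (by nlinarith : (0 : ℝ) ≤ 1 - δ ^ 2)]
  exact lt_of_mul_lt_mul_right this ht.le

theorem norm_sub_lt_of_pd_lt (hδ : δ < 1) (hx : ‖x‖ < 1) (hy : ‖y‖ < 1) (h : pd x y < δ) :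
    ‖x - y‖ < 2 * δ * (1 - ‖x‖ ^ 2) / (1 - δ ^ 2) := by
  have hb := br_pos hx hy.le
  have hδ0 : 0 ≤ δ := (pd_nonneg x y).trans h.le
  have hδ2 : 0 < 1 - δ ^ 2 := by nlinarith
  have hd : ‖x - y‖ < δ * br x y := (div_lt_iff₀ hb).1 h
  have hu := lt_one_sub_norm_sq_of_pd_lt hδ hy hx.le (pd_comm x y ▸ h)
  have key := one_sub_sq_mul_br_sq_lt hx hy.le h
  have ht : 0 < 1 - ‖x‖ ^ 2 := by nlinarith [norm_nonneg x]
  have hb2 : ((1 - δ ^ 2) * br x y) ^ 2 < (2 * (1 - ‖x‖ ^ 2)) ^ 2 :=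
    calc ((1 - δ ^ 2) * br x y) ^ 2 = (1 - δ ^ 2) * ((1 - δ ^ 2) * br x y ^ 2) := by ring
      _ < (1 - δ ^ 2) * ((1 - ‖x‖ ^ 2) * (1 - ‖y‖ ^ 2)) := mul_lt_mul_of_pos_left key hδ2
      _ = (1 - ‖x‖ ^ 2) * ((1 - δ ^ 2) * (1 - ‖y‖ ^ 2)) := by ring
      _ < (1 - ‖x‖ ^ 2) * (4 * (1 - ‖x‖ ^ 2)) := mul_lt_mul_of_pos_left (by linarith) ht
      _ = (2 * (1 - ‖x‖ ^ 2)) ^ 2 := by ring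
  have hb' : (1 - δ ^ 2) * br x y < 2 * (1 - ‖x‖ ^ 2) :=
    lt_of_pow_lt_pow_left₀ 2 (by positivity) hb2
  rw [lt_div_iff₀ hδ2]
  nlinarith

theorem le_norm_sub_of_le_pd (hx : ‖x‖ < 1) (hy : ‖y‖ ≤ 1) (h : δ ≤ pd x y) :
    δ * (1 - ‖x‖ ^ 2) / 2 ≤ ‖x - y‖ := by
  have hb := br_pos hx hy
  rcases le_or_gt 0 δ with hδ | hδ
  · calc δ * (1 - ‖x‖ ^ 2) / 2 ≤ δ * br x y := by
          rw [mul_div_assoc]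
          exact mul_le_mul_of_nonneg_left (one_sub_norm_sq_div_two_le_br hx.le hy) hδ
      _ ≤ ‖x - y‖ := (le_div_iff₀ hb).1 h
  · have ht : 0 ≤ 1 - ‖x‖ ^ 2 := by nlinarith [norm_nonneg x]
    nlinarith [norm_nonneg (x - y), mul_nonpos_of_nonpos_of_nonneg hδ.le ht]

theorem card_le_of_pd_lt {ι : Type*} (hδ0 : 0 < δ) (hδ1 : δ < 1) (hx : ‖x‖ < 1) {a : ι → E n}
    {F : Finset ι} (ha : ∀ k ∈ F, ‖a k‖ < 1 ∧ pd x (a k) < δ)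
    (hsep : (F : Set ι).Pairwise fun j k => δ ≤ pd (a j) (a k)) :
    (F.card : ℝ) ≤ (48 / (1 - δ ^ 2) ^ 2) ^ n := by
  set t := 1 - ‖x‖ ^ 2
  have ht : 0 < t := by nlinarith [norm_nonneg x]
  have hδ2 : 0 < 1 - δ ^ 2 := by nlinarith
  set r := δ * (1 - δ ^ 2) * t / 16
  set R := 3 * δ * t / (1 - δ ^ 2)
  have hsub : ∀ k ∈ F, ball (a k) r ⊆ ball x R := by
    intro k hk
    apply ball_subset_ball'
    have hr : r ≤ δ * t / (1 - δ ^ 2) := by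
      rw [le_div_iff₀ hδ2]
      calc r * (1 - δ ^ 2) = δ * t * ((1 - δ ^ 2) ^ 2 / 16) := by ring
        _ ≤ δ * t * 1 := mul_le_mul_of_nonneg_left (by nlinarith) (by positivity)
        _ = δ * t := mul_one _
    have hR : R = 2 * δ * t / (1 - δ ^ 2) + δ * t / (1 - δ ^ 2) := by ring
    rw [dist_eq_norm, norm_sub_rev]
    linarith [norm_sub_lt_of_pd_lt hδ1 hx (ha k hk).1 (ha k hk).2]
  have hdisj : (F : Set ι).PairwiseDisjoint fun k => ball (a k) r := by
    intro j hj k hk hjk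
    apply ball_disjoint_ball
    rw [dist_eq_norm]
    have hfar := le_norm_sub_of_le_pd (ha j hj).1 (ha k hk).1.le (hsep hj hk hjk)
    have hnear : (1 - δ ^ 2) * t / 4 < 1 - ‖a j‖ ^ 2 :=
      lt_one_sub_norm_sq_of_pd_lt hδ1 hx (ha j hj).1.le (ha j hj).2
    have hrr : r + r = δ / 2 * ((1 - δ ^ 2) * t / 4) := by ring
    nlinarith
  have hpack := card_mul_pow_finrank_le_of_pairwiseDisjoint_ball volume (by positivity)
    (by positivity) hsub hdisj
  have hRr : R = 48 / (1 - δ ^ 2) ^ 2 * r := by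
    simp only [R, r]
    field_simp
    ring
  rw [finrank_euclideanSpace_fin, hRr, mul_pow] at hpack
  exact le_of_mul_le_mul_right hpack (by positivity)

end Pseudohyperbolic

section SeparatedSets

variable {n : ℕ} {δ : ℝ}

/-- Zorn: a maximal `δ`-separated subset of the ball is a `δ`-net. -/
theorem exists_pairwise_le_pd_and_Bset_subset_iUnion_Eball (hδ : 0 < δ) :
    ∃ S ⊆ Bset n, S.Pairwise (fun a b => δ ≤ pd a b) ∧ Bset n ⊆ ⋃ a ∈ S, Eball δ a := by
  obtain ⟨S, hS⟩ := zorn_subset {S : Set (E n) | S ⊆ Bset n ∧ S.Pairwise fun a b => δ ≤ pd a b}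
    fun c hc hchain => ⟨⋃₀ c, ⟨sUnion_subset fun s hs => (hc hs).1,
      (pairwise_sUnion hchain.directedOn).2 fun s hs => (hc hs).2⟩,
      fun _ hs => subset_sUnion_of_mem hs⟩
  refine ⟨S, hS.1.1, hS.1.2, fun y hy => ?_⟩
  by_contra hcov
  have hfar : ∀ a ∈ S, δ ≤ pd a y := fun a ha =>
    not_lt.1 fun h => hcov (mem_iUnion₂.2 ⟨a, ha, hy, h⟩)
  have hyS : y ∈ S := hS.mem_of_prop_insert ⟨insert_subset hy hS.1.1,
    hS.1.2.insert fun a ha _ => ⟨pd_comm y a ▸ hfar a ha, hfar a ha⟩⟩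
  have := hfar y hyS
  rw [pd_self] at this
  linarith

theorem countable_of_pairwise_le_pd (hδ : 0 < δ) {S : Set (E n)} (hS : S ⊆ Bset n)
    (hsep : S.Pairwise fun a b => δ ≤ pd a b) : S.Countable := by
  have hS' : ∀ a ∈ S, ‖a‖ < 1 := fun a ha => mem_Bset_iff.1 (hS ha)
  refine PairwiseDisjoint.countable_of_isOpen (s := fun a => ball a (δ * (1 - ‖a‖ ^ 2) / 4))
    (fun a ha b hb hab => ball_disjoint_ball ?_) (fun _ _ => isOpen_ball) fun a ha =>
      ⟨a, mem_ball_self (by have := sq_lt_one_iff₀ (norm_nonneg a) |>.2 (hS' a ha); positivity)⟩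
  have h₁ := le_norm_sub_of_le_pd (hS' a ha) (hS' b hb).le (hsep ha hb hab)
  have h₂ := le_norm_sub_of_le_pd (hS' b hb) (hS' a ha).le (hsep hb ha hab.symm)
  rw [dist_eq_norm]
  rw [norm_sub_rev] at h₂
  linarith

/-- `pd a y < δ` forces `1 - ‖a‖²` to be small with `1 - ‖y‖²`, so finitely many pseudohyperbolic
balls stay away from the unit sphere. -/
theorem infinite_of_Bset_subset_iUnion_Eball (hn : n ≠ 0) (hδ : δ < 1) {S : Set (E n)}
    (hS : S ⊆ Bset n) (hcov : Bset n ⊆ ⋃ a ∈ S, Eball δ a) : S.Infinite := by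
  intro hfin
  obtain ⟨a₁, ha₁, -, ha₁0⟩ := mem_iUnion₂.1 (hcov (mem_ball_self one_pos))
  have hδ2 : 0 < 1 - δ ^ 2 := by nlinarith [pd_nonneg a₁ 0, ha₁0]
  obtain ⟨a₀, ha₀, hmin⟩ := S.exists_min_image (fun a => 1 - ‖a‖ ^ 2) hfin ⟨a₁, ha₁⟩
  set m := 1 - ‖a₀‖ ^ 2
  have hm : 0 < m := by nlinarith [norm_nonneg a₀, mem_Bset_iff.1 (hS ha₀)]
  have : Nonempty (Fin n) := ⟨⟨0, Nat.pos_of_ne_zero hn⟩⟩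
  obtain ⟨y, hy⟩ := exists_norm_eq (E n) (Real.sqrt_nonneg (1 - (1 - δ ^ 2) * m / 4))
  have hy2 : ‖y‖ ^ 2 = 1 - (1 - δ ^ 2) * m / 4 := by
    rw [hy, Real.sq_sqrt]
    nlinarith [sq_nonneg δ, norm_nonneg a₀]
  have hyB : ‖y‖ < 1 := (sq_lt_one_iff₀ (norm_nonneg y)).1 (by rw [hy2]; nlinarith)
  obtain ⟨a, ha, -, hay⟩ := mem_iUnion₂.1 (hcov (mem_Bset_iff.2 hyB))
  have hnear := lt_one_sub_norm_sq_of_pd_lt hδ (mem_Bset_iff.1 (hS ha)) hyB.le hay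
  nlinarith [mul_le_mul_of_nonneg_left (hmin a ha) hδ2.le]

end SeparatedSets

/-- For `0 < δ < 1` there exist a sequence `{a_k}` in `B` and `N ∈ ℕ`, `N > 0`,
such that `{a_k}` is `δ`-separated, the balls `E_δ(a_k)` cover `B`, and every `x ∈ B`
belongs to at most `N` of the balls `E_δ(a_k)`. -/
theorem stmt5 (n : ℕ) (hn : 2 ≤ n) (δ : ℝ) (hδ0 : 0 < δ) (hδ1 : δ < 1) :
    ∃ (a : ℕ → E n) (N : ℕ), 0 < N ∧ (∀ k, a k ∈ Bset n) ∧
      (∀ j k, j ≠ k → δ ≤ pd (a j) (a k)) ∧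
      (⋃ k, Eball δ (a k)) = Bset n ∧
      ∀ x ∈ Bset n, ({k | x ∈ Eball δ (a k)}).Finite ∧
        ({k | x ∈ Eball δ (a k)}).ncard ≤ N := by
  obtain ⟨S, hSB, hsep, hcov⟩ := exists_pairwise_le_pd_and_Bset_subset_iUnion_Eball (n := n) hδ0
  have : Countable S := (countable_of_pairwise_le_pd hδ0 hSB hsep).to_subtype
  have : Infinite S := (infinite_of_Bset_subset_iUnion_Eball (by omega) hδ1 hSB hcov).to_subtype
  obtain ⟨e⟩ : Nonempty (ℕ ≃ S) := inferInstance
  have hsep' : ∀ j k, j ≠ k → δ ≤ pd (e j : E n) (e k) := fun j k hjk =>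
    hsep (e j).2 (e k).2 (Subtype.coe_injective.ne (e.injective.ne hjk))
  have hδ2 : 0 < 1 - δ ^ 2 := by nlinarith
  refine ⟨fun k => e k, ⌈(48 / (1 - δ ^ 2) ^ 2) ^ n⌉₊, Nat.ceil_pos.2 (by positivity),
    fun k => hSB (e k).2, hsep', ?_, fun x hx => ?_⟩
  · refine (iUnion_subset fun k y hy => hy.1).antisymm fun y hy => ?_
    obtain ⟨a, ha, hya⟩ := mem_iUnion₂.1 (hcov hy)
    exact mem_iUnion.2 ⟨e.symm ⟨a, ha⟩, by simpa using hya⟩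
  refine Set.finite_and_ncard_le_of_forall_finset_card_le fun F hF => Nat.cast_le (α := ℝ).1 ?_
  refine (card_le_of_pd_lt hδ0 hδ1 (mem_Bset_iff.1 hx) (fun k hk => ?_)
    fun j _ k _ hjk => hsep' j k hjk).trans (Nat.le_ceil _)
  rw [pd_comm]
  exact ⟨mem_Bset_iff.1 (hSB (e k).2), (hF hk).2⟩
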